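/- Let M and N be rectangle persistence modules with rectangles (a₁,b₁)×(a₂,b₂) and (c₁,d₁)×(c₂,d₂). If max{‖c−a‖_∞, ‖d−b‖_∞} < min{ min_i(d_i−a_i), min_i(b_i−c_i) }, then d_I(M,N) ≤ max{‖c−a‖_∞, ‖d−b‖_∞}. -/

import Mathlib

/-! When all corner coordinates of the two rectangles differ by at most `ε`, the maps
`M_u → N_{u+(ε,ε)}` that are the identity of `k` wherever both spaces are `k` commute with the
transition maps, and so do the maps in the other direction. Their composites are the
`2ε`-transition maps, because a point `u` with `u` and `u + (2ε,2ε)` in one rectangle has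
`u + (ε,ε)` in the other. So the modules are `ε`-interleaved for `ε` the larger of the two corner
distances, and when that distance is `+∞` there is nothing to prove. -/

open Classical

noncomputable section

/-- A point of the parameter space `ℝⁿ`. -/
abbrev Pt (n : ℕ) := Fin n → ℝ

/-- Shift of a point by the diagonal vector `(ε, …, ε)`. -/
def shiftPt {n : ℕ} (u : Pt n) (ε : ℝ) : Pt n := fun i => u i + ε

lemma shiftPt_mono {n : ℕ} {u v : Pt n} (ε : ℝ) (h : u ≤ v) :
    shiftPt u ε ≤ shiftPt v ε := fun i => by unfold shiftPt; linarith [h i]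

lemma le_shiftPt {n : ℕ} (u : Pt n) {ε : ℝ} (hε : 0 ≤ ε) : u ≤ shiftPt u ε :=
  fun i => le_add_of_nonneg_right hε

/-- An `n`-parameter persistence module over the field `k`. -/
structure PersMod (k : Type) [Field k] (n : ℕ) where
  obj : Pt n → Type
  [acg : ∀ u, AddCommGroup (obj u)]
  [mod : ∀ u, Module k (obj u)]
  map : ∀ {u v : Pt n}, u ≤ v → (obj u →ₗ[k] obj v)
  map_id : ∀ u : Pt n, map (le_refl u) = LinearMap.id
  map_comp : ∀ {u v w : Pt n} (h1 : u ≤ v) (h2 : v ≤ w),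
    (map h2).comp (map h1) = map (h1.trans h2)

attribute [instance] PersMod.acg PersMod.mod

variable {k : Type} [Field k] {n : ℕ}

/-- A morphism of persistence modules. -/
structure PersHom (M N : PersMod k n) where
  app : ∀ u, M.obj u →ₗ[k] N.obj u
  natural : ∀ {u v : Pt n} (h : u ≤ v),
    (app v).comp (M.map h) = (N.map h).comp (app u)

/-- A morphism is trivial when every component is the zero map. -/
def PersHom.Trivial {M N : PersMod k n} (f : PersHom M N) : Prop := ∀ u, f.app u = 0

/-- The `ε`-shift of a persistence module. -/
def PersMod.shift (M : PersMod k n) (ε : ℝ) : PersMod k n where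
  obj u := M.obj (shiftPt u ε)
  map h := M.map (shiftPt_mono ε h)
  map_id u := M.map_id _
  map_comp h1 h2 := M.map_comp _ _

/-- `(f, g)` is an `ε`-interleaving pair between `M` and `N`. -/
def IsInterleavingPair (M N : PersMod k n) (ε : ℝ) (hε : 0 ≤ ε)
    (f : PersHom M (N.shift ε)) (g : PersHom N (M.shift ε)) : Prop :=
  (∀ u : Pt n, (g.app (shiftPt u ε)).comp (f.app u) =
      M.map ((le_shiftPt u hε).trans (le_shiftPt _ hε))) ∧
  (∀ u : Pt n, (f.app (shiftPt u ε)).comp (g.app u) =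
      N.map ((le_shiftPt u hε).trans (le_shiftPt _ hε)))

/-- `M` and `N` are `ε`-interleaved. -/
def Interleaved (M N : PersMod k n) (ε : ℝ) : Prop :=
  ∃ (hε : 0 ≤ ε) (f : PersHom M (N.shift ε)) (g : PersHom N (M.shift ε)),
    IsInterleavingPair M N ε hε f g

/-- The interleaving distance, with value in the extended reals. -/
def interleavingDist (M N : PersMod k n) : EReal :=
  sInf {x : EReal | ∃ ε : ℝ, Interleaved M N ε ∧ x = (ε : EReal)}

/-- `M` is `ε`-trivial : all transition maps `M_u → M_{u+(ε,…,ε)}` vanish. -/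
def EpsTrivial (M : PersMod k n) (ε : ℝ) : Prop :=
  ∀ (u : Pt n) (h : u ≤ shiftPt u ε), M.map h = 0

/-- The zero persistence module. -/
def ZeroMod (k : Type) [Field k] (n : ℕ) : PersMod k n where
  obj _ := PUnit
  map _ := 0
  map_id _ := by apply LinearMap.ext; intro x; exact Subsingleton.elim _ _
  map_comp _ _ := by apply LinearMap.ext; intro x; exact Subsingleton.elim _ _

/-- The space at `u` of the interval module on `I` : all of `k` if `u ∈ I`, `0` otherwise. -/
def segSpace (k : Type) [Field k] {n : ℕ} (I : Set (Pt n)) (u : Pt n) : Submodule k k where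
  carrier := {x | u ∉ I → x = 0}
  add_mem' := by intro x y hx hy h; simp only [Set.mem_setOf_eq] at *; rw [hx h, hy h, add_zero]
  zero_mem' := fun _ => rfl
  smul_mem' := by intro c x hx h; simp only [Set.mem_setOf_eq] at *; rw [hx h, smul_zero]

/-- The interval persistence module on an order-convex set `I` : `k` on `I` with identity
internal transition maps, `0` elsewhere. -/
def IntervalMod (k : Type) [Field k] {n : ℕ} (I : Set (Pt n)) (hI : I.OrdConnected) :
    PersMod k n where
  obj u := segSpace k I u
  map {u v} h :=
    { toFun := fun x => ⟨if v ∈ I then x.1 else 0, by intro hv; simp [hv]⟩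
      map_add' := by intro x y; apply Subtype.ext; by_cases hv : v ∈ I <;> simp [hv]
      map_smul' := by intro c x; apply Subtype.ext; by_cases hv : v ∈ I <;> simp [hv] }
  map_id u := by
    apply LinearMap.ext; intro x
    apply Subtype.ext
    by_cases hu : u ∈ I
    · simp [hu]
    · simp [hu, x.2 hu]
  map_comp {u v w} h1 h2 := by
    apply LinearMap.ext; intro x
    apply Subtype.ext
    by_cases hw : w ∈ I
    · by_cases hv : v ∈ I
      · simp [hw, hv]
      · by_cases hu : u ∈ I
        · exact absurd (hI.out hu hw ⟨h1, h2⟩) hv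
        · simp [hw, hv, x.2 hu]
    · simp [hw]

/-- The open box `∏ᵢ (aᵢ, bᵢ)` with extended-real endpoints. -/
def box {n : ℕ} (a b : Fin n → EReal) : Set (Pt n) :=
  {u | ∀ i, a i < (u i : EReal) ∧ (u i : EReal) < b i}

lemma box_ordConnected {n : ℕ} (a b : Fin n → EReal) : (box a b).OrdConnected := by
  constructor
  intro u hu w hw v hv i
  exact ⟨lt_of_lt_of_le (hu i).1 (by exact_mod_cast hv.1 i),
    lt_of_le_of_lt (by exact_mod_cast hv.2 i) (hw i).2⟩

/-- The rectangle persistence module with underlying open rectangle `∏ᵢ (aᵢ, bᵢ)`. -/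
def RectMod (k : Type) [Field k] {n : ℕ} (a b : Fin n → EReal) : PersMod k n :=
  IntervalMod k (box a b) (box_ordConnected a b)

/-- Subtraction of extended reals with the conventions `(±∞) − (±∞) = 0`. -/
def esub (x y : EReal) : EReal :=
  if (x = ⊤ ∧ y = ⊤) ∨ (x = ⊥ ∧ y = ⊥) then 0 else x - y

/-- Absolute value on the extended reals (`|±∞| = +∞`). -/
def eabs (x : EReal) : EReal := max x (-x)

/-- The `ℓ^∞`-distance `‖x − y‖_∞` on extended `ℝⁿ`. -/
def supDist {n : ℕ} (x y : Fin n → EReal) : EReal := ⨆ i, eabs (esub (x i) (y i))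

/-- The closed formula for the interleaving distance between the rectangle modules with
rectangles `∏ (aᵢ, bᵢ)` and `∏ (cᵢ, dᵢ)`. -/
def dIFormula {n : ℕ} (a b c d : Fin n → EReal) : EReal :=
  min (max (⨅ i, esub (b i) (a i) / 2) (⨅ i, esub (d i) (c i) / 2))
      (max (supDist c a) (supDist d b))

/-- `M` and `N` are isomorphic persistence modules. -/
def PersIso (M N : PersMod k n) : Prop :=
  ∃ f : PersHom M N, ∀ u, Function.Bijective (f.app u)

/-- `M` is a non-zero persistence module. -/
def PersMod.Nonzero (M : PersMod k n) : Prop := ∃ (u : Pt n) (x : M.obj u), x ≠ 0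

/-- Direct sum of two persistence modules. -/
def dirSum (M N : PersMod k n) : PersMod k n where
  obj u := M.obj u × N.obj u
  map h := (M.map h).prodMap (N.map h)
  map_id u := by
    apply LinearMap.ext; intro x
    show ((M.map (le_refl u)) x.1, (N.map (le_refl u)) x.2) = x
    rw [M.map_id, N.map_id]; rfl
  map_comp h1 h2 := by
    apply LinearMap.ext; intro x
    show ((M.map _) ((M.map _) x.1), (N.map _) ((N.map _) x.2))
      = ((M.map _) x.1, (N.map _) x.2)
    have hM : (M.map h2) ((M.map h1) x.1) = (M.map (h1.trans h2)) x.1 := by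
      rw [← M.map_comp h1 h2]; rfl
    have hN : (N.map h2) ((N.map h1) x.2) = (N.map (h1.trans h2)) x.2 := by
      rw [← N.map_comp h1 h2]; rfl
    rw [hM, hN]

/-- Zigzag-connectedness of a subset of `ℝⁿ`. -/
def ZigzagConnected {n : ℕ} (I : Set (Pt n)) : Prop :=
  ∀ u ∈ I, ∀ v ∈ I,
    Relation.ReflTransGen (fun x y => x ∈ I ∧ y ∈ I ∧ (x ≤ y ∨ y ≤ x)) u v

/-- `I` is an interval in `ℝⁿ`: nonempty, order-convex and zigzag-connected. -/
def IsInterval {n : ℕ} (I : Set (Pt n)) : Prop :=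
  I.Nonempty ∧ I.OrdConnected ∧ ZigzagConnected I

/-- A partial multibijection `Fin m ⇸ Fin k'`, encoded by an `Option`-valued map that is
injective on matched indices. -/
def PartialInj {m k' : ℕ} (σ : Fin m → Option (Fin k')) : Prop :=
  ∀ i j l, σ i = some l → σ j = some l → i = j

/-- `σ` is an `ε`-matching between the barcodes `A` and `B` (families of intervals). -/
def IsEpsMatching (k : Type) [Field k] {n m k' : ℕ}
    (A : Fin m → Set (Pt n)) (hA : ∀ i, (A i).OrdConnected)
    (B : Fin k' → Set (Pt n)) (hB : ∀ j, (B j).OrdConnected)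
    (σ : Fin m → Option (Fin k')) (ε : ℝ) : Prop :=
  PartialInj σ ∧
  (∀ i, σ i = none → EpsTrivial (IntervalMod k (A i) (hA i)) (2 * ε)) ∧
  (∀ j, (∀ i, σ i ≠ some j) → EpsTrivial (IntervalMod k (B j) (hB j)) (2 * ε)) ∧
  (∀ i j, σ i = some j →
    Interleaved (IntervalMod k (A i) (hA i)) (IntervalMod k (B j) (hB j)) ε)

/-- The bottleneck distance between the interval decomposable modules with barcodes
`A` and `B`. -/
def bottleneckDist (k : Type) [Field k] {n m k' : ℕ}
    (A : Fin m → Set (Pt n)) (hA : ∀ i, (A i).OrdConnected)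
    (B : Fin k' → Set (Pt n)) (hB : ∀ j, (B j).OrdConnected) : EReal :=
  sInf {x : EReal | ∃ (ε : ℝ) (σ : Fin m → Option (Fin k')),
    0 ≤ ε ∧ IsEpsMatching k A hA B hB σ ε ∧ x = (ε : EReal)}

lemma eabs_nonneg (x : EReal) : 0 ≤ eabs x := by
  rcases le_total 0 x with h | h
  · exact h.trans (le_max_left _ _)
  · exact (EReal.neg_nonneg.2 h).trans (le_max_right _ _)

lemma eabs_neg (x : EReal) : eabs (-x) = eabs x := by
  rw [eabs, eabs, neg_neg, max_comm]

lemma neg_esub (x y : EReal) : -esub x y = esub y x := by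
  induction x using EReal.rec <;> induction y using EReal.rec <;>
    simp [esub, ← EReal.coe_sub, ← EReal.coe_neg]

lemma supDist_comm (x y : Fin n → EReal) : supDist x y = supDist y x := by
  simp only [supDist, ← neg_esub (y _), eabs_neg]

lemma eabs_esub_le_supDist (x y : Fin n → EReal) (i : Fin n) :
    eabs (esub (x i) (y i)) ≤ supDist x y :=
  le_iSup (fun j => eabs (esub (x j) (y j))) i

lemma le_add_of_esub_le {x y : EReal} {ε : ℝ} (h : esub x y ≤ ε) : x ≤ y + ε := by
  unfold esub at h
  split_ifs at h with hxy
  · rcases hxy with ⟨rfl, rfl⟩ | ⟨rfl, -⟩ <;> simp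
  · rwa [EReal.sub_le_iff_le_add (.inr (EReal.coe_ne_top ε)) (.inr (EReal.coe_ne_bot ε)),
      add_comm] at h

lemma le_add_of_supDist_le {x y : Fin n → EReal} {ε : ℝ} (h : supDist x y ≤ ε) (i : Fin n) :
    x i ≤ y i + ε :=
  le_add_of_esub_le ((le_max_left _ _).trans ((eabs_esub_le_supDist x y i).trans h))

lemma lt_coe_add_of_le_add {x y : EReal} {r ε : ℝ} (h : x ≤ y + ε) (hy : y < r) :
    x < ((r + ε : ℝ) : EReal) :=
  h.trans_lt (EReal.add_lt_add_right_coe hy ε)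

lemma coe_lt_of_coe_add_lt {x y : EReal} {r ε : ℝ} (h : y ≤ x + ε)
    (hy : ((r + ε : ℝ) : EReal) < y) :
    (r : EReal) < x := by
  by_contra! hx
  exact (hy.trans_le h).not_ge (by exact_mod_cast add_le_add_left hx _)

lemma interleavingDist_le_of_interleaved {M N : PersMod k n} {ε : ℝ} (h : Interleaved M N ε) :
    interleavingDist M N ≤ ε :=
  sInf_le ⟨ε, h, rfl⟩

section IntervalMod

def intervalShiftMap (I J : Set (Pt n)) (ε : ℝ) (u : Pt n) :
    segSpace k I u →ₗ[k] segSpace k J (shiftPt u ε) where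
  toFun x := ⟨if shiftPt u ε ∈ J then x.1 else 0, fun h => by simp [h]⟩
  map_add' x y := by apply Subtype.ext; by_cases h : shiftPt u ε ∈ J <;> simp [h]
  map_smul' c x := by apply Subtype.ext; by_cases h : shiftPt u ε ∈ J <;> simp [h]

def ShiftCompatible (I J : Set (Pt n)) (ε : ℝ) : Prop :=
  ∀ ⦃u v : Pt n⦄, u ≤ v → u ∈ I → shiftPt v ε ∈ J → (v ∈ I ↔ shiftPt u ε ∈ J)

variable {I J : Set (Pt n)} {ε : ℝ}

def intervalShiftHom (hI : I.OrdConnected) (hJ : J.OrdConnected)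
    (hIJ : ShiftCompatible I J ε) :
    PersHom (IntervalMod k I hI) ((IntervalMod k J hJ).shift ε) where
  app u := intervalShiftMap I J ε u
  natural {u v} huv := by
    refine LinearMap.ext fun x => Subtype.ext ?_
    show (if shiftPt v ε ∈ J then (if v ∈ I then x.1 else 0) else 0)
       = (if shiftPt v ε ∈ J then (if shiftPt u ε ∈ J then x.1 else 0) else 0)
    by_cases hv : shiftPt v ε ∈ J
    · by_cases hu : u ∈ I
      · simp only [if_pos hv, hIJ huv hu hv]
      · simp [x.2 hu]
    · simp [hv]

lemma intervalShiftMap_comp (hI : I.OrdConnected) {u : Pt n}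
    (hu : u ∈ I → shiftPt (shiftPt u ε) ε ∈ I → shiftPt u ε ∈ J)
    (h : u ≤ shiftPt (shiftPt u ε) ε) :
    (intervalShiftMap J I ε (shiftPt u ε)).comp (intervalShiftMap I J ε u) =
      (IntervalMod k I hI).map h := by
  refine LinearMap.ext fun x => Subtype.ext ?_
  show (if shiftPt (shiftPt u ε) ε ∈ I then (if shiftPt u ε ∈ J then x.1 else 0) else 0)
     = (if shiftPt (shiftPt u ε) ε ∈ I then x.1 else 0)
  by_cases h2 : shiftPt (shiftPt u ε) ε ∈ I
  · by_cases h0 : u ∈ I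
    · simp only [if_pos h2, if_pos (hu h0 h2)]
    · simp [x.2 h0]
  · simp [h2]

lemma interleaved_intervalMod (hI : I.OrdConnected) (hJ : J.OrdConnected) (hε : 0 ≤ ε)
    (hIJ : ShiftCompatible I J ε) (hJI : ShiftCompatible J I ε)
    (hIJI : ∀ u ∈ I, shiftPt (shiftPt u ε) ε ∈ I → shiftPt u ε ∈ J)
    (hJIJ : ∀ u ∈ J, shiftPt (shiftPt u ε) ε ∈ J → shiftPt u ε ∈ I) :
    Interleaved (IntervalMod k I hI) (IntervalMod k J hJ) ε :=
  ⟨hε, intervalShiftHom hI hJ hIJ, intervalShiftHom hJ hI hJI,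
    fun u => intervalShiftMap_comp hI (hIJI u) _, fun u => intervalShiftMap_comp hJ (hJIJ u) _⟩

end IntervalMod

section RectMod

variable {a b c d : Fin n → EReal} {ε : ℝ}

lemma shiftCompatible_box (hca : ∀ i, c i ≤ a i + ε) (hdb : ∀ i, d i ≤ b i + ε) :
    ShiftCompatible (box a b) (box c d) ε := by
  intro u v huv hu hv
  refine iff_of_true (fun i => ⟨(hu i).1.trans_le (by exact_mod_cast huv i), ?_⟩)
    (fun i => ⟨lt_coe_add_of_le_add (hca i) (hu i).1, lt_of_le_of_lt ?_ (hv i).2⟩)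
  · exact coe_lt_of_coe_add_lt (hdb i) (hv i).2
  · exact_mod_cast add_le_add_left (huv i) ε

lemma shiftPt_mem_box (hca : ∀ i, c i ≤ a i + ε) (hbd : ∀ i, b i ≤ d i + ε) {u : Pt n}
    (hu : u ∈ box a b) (hu' : shiftPt (shiftPt u ε) ε ∈ box a b) :
    shiftPt u ε ∈ box c d :=
  fun i => ⟨lt_coe_add_of_le_add (hca i) (hu i).1, coe_lt_of_coe_add_lt (hbd i) (hu' i).2⟩

lemma interleaved_rectMod (hε : 0 ≤ ε) (hca : ∀ i, c i ≤ a i + ε) (hac : ∀ i, a i ≤ c i + ε)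
    (hdb : ∀ i, d i ≤ b i + ε) (hbd : ∀ i, b i ≤ d i + ε) :
    Interleaved (RectMod k a b) (RectMod k c d) ε :=
  interleaved_intervalMod _ _ hε (shiftCompatible_box hca hdb) (shiftCompatible_box hac hbd)
    (fun _ => shiftPt_mem_box hca hbd) (fun _ => shiftPt_mem_box hac hdb)

lemma interleavingDist_rectMod_le (hε : 0 ≤ ε) (hca : supDist c a ≤ ε)
    (hdb : supDist d b ≤ ε) : interleavingDist (RectMod k a b) (RectMod k c d) ≤ ε :=
  interleavingDist_le_of_interleaved <| interleaved_rectMod hε (le_add_of_supDist_le hca)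
    (le_add_of_supDist_le (supDist_comm c a ▸ hca)) (le_add_of_supDist_le hdb)
    (le_add_of_supDist_le (supDist_comm d b ▸ hdb))

end RectMod

theorem interleavingDist_le_supDist_general (a b c d : Fin 2 → EReal) :
    interleavingDist (RectMod k a b) (RectMod k c d) ≤
      max (supDist c a) (supDist d b) := by
  have hca : supDist c a ≤ max (supDist c a) (supDist d b) := le_max_left _ _
  have hdb : supDist d b ≤ max (supDist c a) (supDist d b) := le_max_right _ _
  have h0 : 0 ≤ supDist c a := (eabs_nonneg _).trans (eabs_esub_le_supDist c a 0)
  generalize max (supDist c a) (supDist d b) = E at hca hdb ⊢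
  induction E using EReal.rec with
  | bot => exact absurd (h0.trans hca) (by simp)
  | coe ε => exact interleavingDist_rectMod_le (by exact_mod_cast h0.trans hca) hca hdb
  | top => exact le_top

theorem interleavingDist_le_supDist (a b c d : Fin 2 → EReal)
    (ha : ∀ i, a i ≠ ⊤) (hb : ∀ i, b i ≠ ⊥)
    (hc : ∀ i, c i ≠ ⊤) (hd : ∀ i, d i ≠ ⊥) (hab : ∀ i, a i < b i) (hcd : ∀ i, c i < d i)
    (h : max (supDist c a) (supDist d b) <
      min (⨅ i, esub (d i) (a i)) (⨅ i, esub (b i) (c i))) :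
    interleavingDist (RectMod k a b) (RectMod k c d) ≤
      max (supDist c a) (supDist d b) :=
  interleavingDist_le_supDist_general a b c d

end
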